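/- For a smooth function φ : ℝ^m → ℝ and families of smooth functions σ^{I,i} (I ∈ ℕ^m with |I| ≤ k−1, 1 ≤ i ≤ m) satisfying: (0) 0 = F_0 ∘ j φ − ∑_j ∂σ^{0,j}/∂x^j; (i) for 1 ≤ |J| ≤ k−1, ∑_{I+1_i=J} σ^{I,i} = F_J ∘ jφ − ∑_j ∂σ^{J,j}/∂x^j; (k) for |K| = k, ∑_{I+1_i=K} σ^{I,i} = F_K ∘ jφ; one can derive by iterated substitution that ∑_{|J|=0}^{k} (−1)^{|J|} (∂^{|J|}/∂x^J)(F_J ∘ jφ) = 0, where F_J ∘ jφ denotes smooth functions of x. (Telescoping derivation of the higher-order Euler–Lagrange equation.) -/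

import Mathlib

open Finset

/-- The length `|I|` of a multi-index `I ∈ ℕ^m`. -/
def mdeg {m : ℕ} (I : Fin m →₀ ℕ) : ℕ := I.sum fun _ n => n

/-- The finset of multi-indexes `I ∈ ℕ^m` with `|I| = l`. -/
def Lam (m l : ℕ) : Finset (Fin m →₀ ℕ) := Finset.finsuppAntidiag Finset.univ l

/-- The finset of pairs `(I, i)` with `I + 1_i = J`. -/
noncomputable def pairsTo {m : ℕ} (J : Fin m →₀ ℕ) : Finset ((Fin m →₀ ℕ) × Fin m) :=
  ((Lam m (mdeg J - 1)) ×ˢ Finset.univ).filter fun p => p.1 + Finsupp.single p.2 1 = J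


/-- The partial derivative `∂f/∂x^i` of a function on `ℝ^m`. -/
noncomputable def pd {m : ℕ} (i : Fin m) (f : (Fin m → ℝ) → ℝ) : (Fin m → ℝ) → ℝ :=
  fun x => fderiv ℝ f x (Pi.single i 1)

/-- The iterated partial derivative `∂^{|I|}f/∂x^I` associated to a multi-index
`I`, differentiating `I(i)` times with respect to `x^i`. -/
noncomputable def pdMulti {m : ℕ} (I : Fin m →₀ ℕ) (f : (Fin m → ℝ) → ℝ) :
    (Fin m → ℝ) → ℝ :=
  ((List.finRange m).foldr (fun i g => (pd i)^[I i] ∘ g) id) f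

section Aux

variable {m : ℕ}

lemma pd_contDiff (i : Fin m) {f : (Fin m → ℝ) → ℝ} (hf : ContDiff ℝ (⊤ : ℕ∞) f) :
    ContDiff ℝ (⊤ : ℕ∞) (pd i f) := by
  unfold pd
  exact (hf.fderiv_right (by simp)).clm_apply contDiff_const

lemma pd_comm (i j : Fin m) {f : (Fin m → ℝ) → ℝ} (hf : ContDiff ℝ (⊤ : ℕ∞) f) :
    pd i (pd j f) = pd j (pd i f) := by
  have hdf : Differentiable ℝ f := hf.differentiable (by simp)
  have hdf' : Differentiable ℝ (fderiv ℝ f) :=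
    (hf.fderiv_right (by simp) : ContDiff ℝ (⊤ : ℕ∞) _).differentiable (by simp)
  funext x
  have key : ∀ v w : Fin m → ℝ, fderiv ℝ (fun y => fderiv ℝ f y v) x w
      = fderiv ℝ (fderiv ℝ f) x w v := by
    intro v w
    have h1 : HasFDerivAt (fun y => fderiv ℝ f y v)
        ((ContinuousLinearMap.apply ℝ ℝ v).comp (fderiv ℝ (fderiv ℝ f) x)) x :=
      (ContinuousLinearMap.apply ℝ ℝ v).hasFDerivAt.comp x (hdf' x).hasFDerivAt
    rw [h1.fderiv]; rfl
  have symm := second_derivative_symmetric (f := f) (f' := fderiv ℝ f)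
      (fun y => (hdf y).hasFDerivAt) (hdf' x).hasFDerivAt
  show fderiv ℝ (fun y => fderiv ℝ f y (Pi.single j 1)) x (Pi.single i 1)
      = fderiv ℝ (fun y => fderiv ℝ f y (Pi.single i 1)) x (Pi.single j 1)
  rw [key, key, symm]

lemma pd_iter_contDiff (i : Fin m) (n : ℕ) {f : (Fin m → ℝ) → ℝ} (hf : ContDiff ℝ (⊤ : ℕ∞) f) :
    ContDiff ℝ (⊤ : ℕ∞) ((pd i)^[n] f) := by
  induction n with
  | zero => exact hf
  | succ n ih => rw [Function.iterate_succ_apply']; exact pd_contDiff i ih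

lemma pd_iter_comm (i j : Fin m) (n : ℕ) {f : (Fin m → ℝ) → ℝ} (hf : ContDiff ℝ (⊤ : ℕ∞) f) :
    pd i ((pd j)^[n] f) = (pd j)^[n] (pd i f) := by
  induction n with
  | zero => rfl
  | succ n ih =>
      rw [Function.iterate_succ_apply', Function.iterate_succ_apply',
        pd_comm i j (pd_iter_contDiff j n hf), ih]

noncomputable def chain (I : Fin m →₀ ℕ) (L : List (Fin m)) (f : (Fin m → ℝ) → ℝ) :
    (Fin m → ℝ) → ℝ :=
  (L.foldr (fun i g => (pd i)^[I i] ∘ g) id) f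

lemma chain_cons (I : Fin m →₀ ℕ) (j : Fin m) (t : List (Fin m)) (f : (Fin m → ℝ) → ℝ) :
    chain I (j :: t) f = (pd j)^[I j] (chain I t f) := rfl

lemma pdMulti_eq_chain (I : Fin m →₀ ℕ) (f : (Fin m → ℝ) → ℝ) :
    pdMulti I f = chain I (List.finRange m) f := rfl

lemma chain_contDiff (I : Fin m →₀ ℕ) (L : List (Fin m)) {f : (Fin m → ℝ) → ℝ}
    (hf : ContDiff ℝ (⊤ : ℕ∞) f) : ContDiff ℝ (⊤ : ℕ∞) (chain I L f) := by
  induction L with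
  | nil => exact hf
  | cons j t ih => rw [chain_cons]; exact pd_iter_contDiff j _ ih

lemma chain_pd_comm (I : Fin m →₀ ℕ) (L : List (Fin m)) (i : Fin m)
    {f : (Fin m → ℝ) → ℝ} (hf : ContDiff ℝ (⊤ : ℕ∞) f) :
    pd i (chain I L f) = chain I L (pd i f) := by
  induction L with
  | nil => rfl
  | cons j t ih =>
      rw [chain_cons, chain_cons, ← ih, pd_iter_comm i j _ (chain_contDiff I t hf)]

lemma chain_congr {I I' : Fin m →₀ ℕ} (L : List (Fin m)) (h : ∀ j ∈ L, I j = I' j)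
    (f : (Fin m → ℝ) → ℝ) : chain I L f = chain I' L f := by
  induction L with
  | nil => rfl
  | cons j t ih =>
      rw [chain_cons, chain_cons, h j List.mem_cons_self,
        ih (fun j hj => h j (List.mem_cons_of_mem _ hj))]

lemma chain_add_single (I : Fin m →₀ ℕ) (L : List (Fin m)) (hL : L.Nodup) (i : Fin m)
    (hi : i ∈ L) {f : (Fin m → ℝ) → ℝ} (hf : ContDiff ℝ (⊤ : ℕ∞) f) :
    chain (I + Finsupp.single i 1) L f = chain I L (pd i f) := by
  induction L with
  | nil => simp at hi
  | cons j t ih =>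
      rcases List.nodup_cons.mp hL with ⟨hjt, hnd⟩
      by_cases h : j = i
      · subst h
        have hjt' : ∀ j' ∈ t, ((I + Finsupp.single j 1) : Fin m →₀ ℕ) j' = I j' := by
          intro j' hj'
          have hne : j' ≠ j := fun e => hjt (e ▸ hj')
          rw [Finsupp.add_apply, Finsupp.single_apply, if_neg (Ne.symm hne), add_zero]
        rw [chain_cons, chain_cons, chain_congr t hjt' f]
        have hIj : ((I + Finsupp.single j 1) : Fin m →₀ ℕ) j = I j + 1 := by
          rw [Finsupp.add_apply, Finsupp.single_apply, if_pos rfl]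
        rw [hIj, Function.iterate_succ_apply, chain_pd_comm I t j (hf := hf)]
      · have hit : i ∈ t := by
          rcases List.mem_cons.mp hi with h' | h'
          · exact absurd h'.symm h
          · exact h'
        have hIj : ((I + Finsupp.single i 1) : Fin m →₀ ℕ) j = I j := by
          rw [Finsupp.add_apply, Finsupp.single_apply,
            if_neg (fun e => h e.symm), add_zero]
        rw [chain_cons, chain_cons, hIj, ih hnd hit]

lemma pdMulti_add_single (I : Fin m →₀ ℕ) (i : Fin m) {f : (Fin m → ℝ) → ℝ}
    (hf : ContDiff ℝ (⊤ : ℕ∞) f) :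
    pdMulti (I + Finsupp.single i 1) f = pdMulti I (pd i f) := by
  rw [pdMulti_eq_chain, pdMulti_eq_chain]
  exact chain_add_single I _ (List.nodup_finRange m) i (List.mem_finRange i) hf

lemma pdMulti_zero (f : (Fin m → ℝ) → ℝ) : pdMulti (0 : Fin m →₀ ℕ) f = f := by
  rw [pdMulti_eq_chain]
  induction (List.finRange m) with
  | nil => rfl
  | cons j t ih => rw [chain_cons, ih]; simp

lemma pd_sum {ι : Type*} (s : Finset ι) (f : ι → (Fin m → ℝ) → ℝ)
    (hf : ∀ p ∈ s, ContDiff ℝ (⊤ : ℕ∞) (f p)) (i : Fin m) :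
    pd i (fun x => ∑ p ∈ s, f p x) = fun x => ∑ p ∈ s, pd i (f p) x := by
  funext x
  unfold pd
  rw [fderiv_fun_sum (fun p hp => ((hf p hp).differentiable (by simp)) x)]
  simp

lemma pd_iter_sum {ι : Type*} (s : Finset ι) (f : ι → (Fin m → ℝ) → ℝ)
    (hf : ∀ p ∈ s, ContDiff ℝ (⊤ : ℕ∞) (f p)) (i : Fin m) (n : ℕ) :
    (pd i)^[n] (fun x => ∑ p ∈ s, f p x) = fun x => ∑ p ∈ s, (pd i)^[n] (f p) x := by
  induction n with
  | zero => rfl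
  | succ n ih =>
      rw [Function.iterate_succ_apply', ih,
        pd_sum s _ (fun p hp => pd_iter_contDiff i n (hf p hp)) i]
      funext x
      exact Finset.sum_congr rfl fun p hp => by rw [Function.iterate_succ_apply']

lemma chain_sum {ι : Type*} (I : Fin m →₀ ℕ) (L : List (Fin m)) (s : Finset ι)
    (f : ι → (Fin m → ℝ) → ℝ) (hf : ∀ p ∈ s, ContDiff ℝ (⊤ : ℕ∞) (f p)) :
    chain I L (fun x => ∑ p ∈ s, f p x) = fun x => ∑ p ∈ s, chain I L (f p) x := by
  induction L with
  | nil => rfl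
  | cons j t ih =>
      rw [chain_cons, ih,
        pd_iter_sum s _ (fun p hp => chain_contDiff I t (hf p hp)) j (I j)]
      rfl

lemma pd_sub (f g : (Fin m → ℝ) → ℝ) (hf : ContDiff ℝ (⊤ : ℕ∞) f) (hg : ContDiff ℝ (⊤ : ℕ∞) g)
    (i : Fin m) : pd i (fun x => f x - g x) = fun x => pd i f x - pd i g x := by
  funext x
  unfold pd
  rw [fderiv_fun_sub ((hf.differentiable (by simp)) x) ((hg.differentiable (by simp)) x)]
  simp

lemma pd_iter_sub (f g : (Fin m → ℝ) → ℝ) (hf : ContDiff ℝ (⊤ : ℕ∞) f) (hg : ContDiff ℝ (⊤ : ℕ∞) g)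
    (i : Fin m) (n : ℕ) :
    (pd i)^[n] (fun x => f x - g x) = fun x => (pd i)^[n] f x - (pd i)^[n] g x := by
  induction n with
  | zero => rfl
  | succ n ih =>
      rw [Function.iterate_succ_apply', ih,
        pd_sub _ _ (pd_iter_contDiff i n hf) (pd_iter_contDiff i n hg) i]
      funext x
      rw [Function.iterate_succ_apply', Function.iterate_succ_apply']

lemma chain_sub (I : Fin m →₀ ℕ) (L : List (Fin m)) (f g : (Fin m → ℝ) → ℝ)
    (hf : ContDiff ℝ (⊤ : ℕ∞) f) (hg : ContDiff ℝ (⊤ : ℕ∞) g) :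
    chain I L (fun x => f x - g x) = fun x => chain I L f x - chain I L g x := by
  induction L with
  | nil => rfl
  | cons j t ih =>
      rw [chain_cons, ih,
        pd_iter_sub _ _ (chain_contDiff I t hf) (chain_contDiff I t hg) j (I j)]
      rfl

lemma mdeg_eq_sum (I : Fin m →₀ ℕ) : mdeg I = ∑ i : Fin m, I i :=
  Finsupp.sum_fintype _ _ (fun _ => rfl)

lemma mdeg_add (a b : Fin m →₀ ℕ) : mdeg (a + b) = mdeg a + mdeg b := by
  simp [mdeg_eq_sum, Finset.sum_add_distrib]

lemma mdeg_single (i : Fin m) : mdeg (Finsupp.single i 1) = 1 := by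
  rw [mdeg_eq_sum]
  simp [Finsupp.single_apply]

lemma mem_Lam {l : ℕ} {J : Fin m →₀ ℕ} : J ∈ Lam m l ↔ mdeg J = l := by
  simp [Lam, Finset.mem_finsuppAntidiag, mdeg_eq_sum]

lemma Lam_zero : Lam m 0 = {0} := by
  ext J
  simp only [mem_Lam, Finset.mem_singleton]
  constructor
  · intro h
    have h2 : ∑ i : Fin m, J i = 0 := by rw [← mdeg_eq_sum]; exact h
    ext i
    exact Finset.sum_eq_zero_iff.mp h2 i (Finset.mem_univ i)
  · rintro rfl
    simp [mdeg]

lemma mem_pairsTo {J : Fin m →₀ ℕ} {p : (Fin m →₀ ℕ) × Fin m} :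
    p ∈ pairsTo J ↔ p.1 ∈ Lam m (mdeg J - 1) ∧ p.1 + Finsupp.single p.2 1 = J := by
  simp [pairsTo, Finset.mem_filter, Finset.mem_product]

lemma sum_pairs {l : ℕ} (hl : 1 ≤ l) (g : (Fin m →₀ ℕ) × Fin m → ℝ) :
    ∑ J ∈ Lam m l, ∑ p ∈ pairsTo J, g p
      = ∑ p ∈ (Lam m (l - 1)) ×ˢ (Finset.univ : Finset (Fin m)), g p := by
  have h1 : ∀ J ∈ Lam m l,
      ∑ p ∈ pairsTo J, g p
        = ∑ p ∈ (Lam m (l - 1)) ×ˢ (Finset.univ : Finset (Fin m)),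
            if p.1 + Finsupp.single p.2 1 = J then g p else 0 := by
    intro J hJ
    rw [pairsTo, mem_Lam.mp hJ, Finset.sum_filter]
  rw [Finset.sum_congr rfl h1, Finset.sum_comm]
  apply Finset.sum_congr rfl
  intro p hp
  have hp1 : mdeg p.1 = l - 1 := mem_Lam.mp (Finset.mem_product.mp hp).1
  have hmem : p.1 + Finsupp.single p.2 1 ∈ Lam m l := by
    rw [mem_Lam, mdeg_add, mdeg_single, hp1]
    omega
  rw [Finset.sum_ite_eq (Lam m l) (p.1 + Finsupp.single p.2 1) (fun _ => g p),
    if_pos hmem]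

end Aux

/-- Telescoping derivation of the higher-order Euler–Lagrange equation
(Proposition 3.3 of the paper): from the relations (0), (i) and (k) between the
functions `F_J ∘ jφ` and the momenta `σ^{I,i}`, one deduces
`∑_{|J|=0}^{k} (−1)^{|J|} ∂^J (F_J ∘ jφ) = 0`. -/
theorem euler_lagrange_telescoping (m k : ℕ) (hk : 1 ≤ k)
    (F : (Fin m →₀ ℕ) → (Fin m → ℝ) → ℝ)
    (σ : (Fin m →₀ ℕ) → Fin m → (Fin m → ℝ) → ℝ)
    (hF : ∀ J, ContDiff ℝ (⊤ : ℕ∞) (F J)) (hσ : ∀ I i, ContDiff ℝ (⊤ : ℕ∞) (σ I i))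
    (h0 : ∀ x, (0 : ℝ) = F 0 x - ∑ j : Fin m, pd j (σ 0 j) x)
    (hi : ∀ J : Fin m →₀ ℕ, 1 ≤ mdeg J → mdeg J ≤ k - 1 →
      ∀ x, ∑ p ∈ pairsTo J, σ p.1 p.2 x = F J x - ∑ j : Fin m, pd j (σ J j) x)
    (hk' : ∀ K : Fin m →₀ ℕ, mdeg K = k →
      ∀ x, ∑ p ∈ pairsTo K, σ p.1 p.2 x = F K x) :
    ∀ x, ∑ l ∈ Finset.range (k + 1), (-1 : ℝ) ^ l *
        ∑ J ∈ Lam m l, pdMulti J (F J) x = 0 := by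
  intro x
  obtain ⟨n, rfl⟩ : ∃ n, k = n + 1 := ⟨k - 1, by omega⟩
  set A : ℕ → ℝ := fun l =>
    ∑ p ∈ (Lam m l) ×ˢ (Finset.univ : Finset (Fin m)),
      pdMulti p.1 (pd p.2 (σ p.1 p.2)) x with hA
  set S : ℕ → ℝ := fun l => ∑ J ∈ Lam m l, pdMulti J (F J) x with hS
  have hdiv : ∀ J : Fin m →₀ ℕ, ContDiff ℝ (⊤ : ℕ∞) (fun y => ∑ j : Fin m, pd j (σ J j) y) :=
    fun J => ContDiff.sum fun j _ => pd_contDiff j (hσ J j)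
  -- key: computing ∂^J applied to ∑_{I+1_i=J} σ^{I,i}
  have lhs_eq : ∀ (J : Fin m →₀ ℕ) (G : (Fin m → ℝ) → ℝ),
      (∀ y, (∑ p ∈ pairsTo J, σ p.1 p.2 y) = G y) →
      (∑ p ∈ pairsTo J, pdMulti p.1 (pd p.2 (σ p.1 p.2)) x) = pdMulti J G x := by
    intro J G hG
    have hfun : (fun y => ∑ p ∈ pairsTo J, σ p.1 p.2 y) = G := funext hG
    calc ∑ p ∈ pairsTo J, pdMulti p.1 (pd p.2 (σ p.1 p.2)) x
        = ∑ p ∈ pairsTo J, chain J (List.finRange m) (σ p.1 p.2) x := by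
          apply Finset.sum_congr rfl
          intro p hp
          have hpJ : p.1 + Finsupp.single p.2 1 = J := (mem_pairsTo.mp hp).2
          rw [← pdMulti_add_single p.1 p.2 (hσ p.1 p.2), hpJ, pdMulti_eq_chain]
      _ = chain J (List.finRange m) (fun y => ∑ p ∈ pairsTo J, σ p.1 p.2 y) x := by
          rw [chain_sum J _ (pairsTo J) _ (fun p _ => hσ p.1 p.2)]
      _ = pdMulti J G x := by rw [hfun, pdMulti_eq_chain]
  -- middle rows
  have main_mid : ∀ l, 1 ≤ l → l ≤ (n + 1) - 1 → ∀ J ∈ Lam m l,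
      ∑ p ∈ pairsTo J, pdMulti p.1 (pd p.2 (σ p.1 p.2)) x
        = pdMulti J (F J) x - ∑ j : Fin m, pdMulti J (pd j (σ J j)) x := by
    intro l hl1 hlk J hJ
    have hJl : mdeg J = l := mem_Lam.mp hJ
    have heq := lhs_eq J (fun y => F J y - ∑ j : Fin m, pd j (σ J j) y)
      (fun y => hi J (hJl ▸ hl1) (hJl ▸ hlk) y)
    rw [heq, pdMulti_eq_chain, chain_sub J _ _ _ (hF J) (hdiv J)]
    have h2 : chain J (List.finRange m) (fun y => ∑ j : Fin m, pd j (σ J j) y) x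
        = ∑ j : Fin m, pdMulti J (pd j (σ J j)) x := by
      rw [chain_sum J _ Finset.univ _ (fun j _ => pd_contDiff j (hσ J j))]
      rfl
    rw [← h2, ← pdMulti_eq_chain]
  -- top row
  have main_top : ∀ K ∈ Lam m (n + 1),
      ∑ p ∈ pairsTo K, pdMulti p.1 (pd p.2 (σ p.1 p.2)) x = pdMulti K (F K) x := by
    intro K hK
    exact lhs_eq K (F K) (fun y => hk' K (mem_Lam.mp hK) y)
  -- S 0 = A 0
  have hS0 : S 0 = A 0 := by
    have h1 : S 0 = F 0 x := by
      show (∑ J ∈ Lam m 0, pdMulti J (F J) x) = F 0 x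
      rw [Lam_zero, Finset.sum_singleton, pdMulti_zero]
    have h2 : A 0 = ∑ j : Fin m, pd j (σ 0 j) x := by
      show (∑ p ∈ (Lam m 0) ×ˢ (Finset.univ : Finset (Fin m)),
        pdMulti p.1 (pd p.2 (σ p.1 p.2)) x) = _
      rw [Lam_zero, Finset.singleton_product, Finset.sum_map]
      apply Finset.sum_congr rfl
      intro j _
      simp [pdMulti_zero]
    rw [h1, h2]
    linarith [h0 x]
  -- S l = A (l-1) + A l for middle l
  have hmid : ∀ l, 1 ≤ l → l ≤ (n + 1) - 1 → S l = A (l - 1) + A l := by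
    intro l h1 h2
    have hsum := Finset.sum_congr rfl (main_mid l h1 h2)
    rw [sum_pairs h1, Finset.sum_sub_distrib] at hsum
    have hAl : A l = ∑ J ∈ Lam m l, ∑ j : Fin m, pdMulti J (pd j (σ J j)) x :=
      Finset.sum_product _ _ _
    have hAl1 : A (l - 1) = ∑ p ∈ (Lam m (l - 1)) ×ˢ (Finset.univ : Finset (Fin m)),
        pdMulti p.1 (pd p.2 (σ p.1 p.2)) x := rfl
    have hSl : S l = ∑ J ∈ Lam m l, pdMulti J (F J) x := rfl
    rw [← hAl, ← hAl1, ← hSl] at hsum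
    linarith
  -- S (n + 1) = A (k-1)
  have htop : S (n + 1) = A ((n + 1) - 1) := by
    have hsum := Finset.sum_congr rfl main_top
    rw [sum_pairs (by omega : 1 ≤ n + 1)] at hsum
    exact hsum.symm
  -- telescoping
  have htel : ∀ j, j ≤ (n + 1) - 1 →
      ∑ l ∈ Finset.range (j + 1), (-1 : ℝ) ^ l * S l = (-1) ^ j * A j := by
    intro j hj
    induction j with
    | zero => simpa using hS0
    | succ n ih =>
        rw [Finset.sum_range_succ, ih (by omega), hmid (n + 1) (by omega) hj]
        simp only [Nat.add_sub_cancel, pow_succ]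
        ring
  rw [Finset.sum_range_succ, htel n (by omega)]
  show (-1 : ℝ) ^ n * A n + (-1 : ℝ) ^ (n + 1) * S (n + 1) = 0
  rw [htop]
  simp only [Nat.add_sub_cancel, pow_succ]
  ring
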